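/- For every p ∈ [0,1], if there exists a natural number n with T_n(p) < (√5 − 1)/2, then lim_{n→∞} T_n(p) = 0. -/

import Mathlib

/-!
A tiling of the square by order-`(n+1)` dyadic tiles has no tile crossing the vertical midline or
no tile crossing the horizontal one, since a full-width and a full-height strip would overlap. So it
splits into tilings of two halves, and rescaling a half onto the square turns its tiles into
order-`n` tiles, the two halves using disjoint sets of tiles. Hence
`T_{n+1} ≤ P((A₁ ∩ A₂) ∪ (B₁ ∩ B₂))` with `A₁, A₂` independent, `B₁, B₂` independent, all four
increasing and of probability `T_n`; by Harris' inequality `T_{n+1} ≤ 2 T_n² - T_n⁴`. Below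
`(√5 - 1)/2` this recursion contracts geometrically to `0`.
-/

open Set Filter Topology

noncomputable section

/-- The dyadic tile `[a/2^i, (a+1)/2^i] × [b/2^j, (b+1)/2^j]` as a subset of `ℝ × ℝ`. -/
def dyadicTile (i j a b : ℕ) : Set (ℝ × ℝ) :=
  Set.Icc ((a : ℝ) / 2 ^ i) (((a : ℝ) + 1) / 2 ^ i) ×ˢ
    Set.Icc ((b : ℝ) / 2 ^ j) (((b : ℝ) + 1) / 2 ^ j)

/-- `t` is a dyadic tile of order `n` contained in the unit square. -/
def IsDyadicTile (n : ℕ) (t : Set (ℝ × ℝ)) : Prop :=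
  ∃ i j a b : ℕ, i + j = n ∧ a < 2 ^ i ∧ b < 2 ^ j ∧ t = dyadicTile i j a b

/-- `F` is a tiling of the region `R` by dyadic tiles of order `n`:
a set of order-`n` tiles whose union is `R` and whose interiors are pairwise disjoint. -/
def IsTiling (n : ℕ) (F : Set (Set (ℝ × ℝ))) (R : Set (ℝ × ℝ)) : Prop :=
  (∀ t ∈ F, IsDyadicTile n t) ∧ ⋃₀ F = R ∧
    F.Pairwise fun s t => interior s ∩ interior t = ∅

def unitSquare : Set (ℝ × ℝ) := Set.Icc (0 : ℝ) 1 ×ˢ Set.Icc (0 : ℝ) 1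

/-- Index type for the dyadic tiles of order `n`: a shape `i` (width `2^{-i}`, height
`2^{-(n-i)}`) together with the horizontal and vertical positions. -/
abbrev TileIndex (n : ℕ) : Type :=
  Σ i : Fin (n + 1), Fin (2 ^ (i : ℕ)) × Fin (2 ^ (n - (i : ℕ)))

/-- The order-`n` tile corresponding to an index. -/
def tileOf (n : ℕ) (x : TileIndex n) : Set (ℝ × ℝ) :=
  dyadicTile (x.1 : ℕ) (n - (x.1 : ℕ)) (x.2.1 : ℕ) (x.2.2 : ℕ)

/-- The set `S` of available order-`n` tiles admits a tiling of the unit square. -/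
def TileableSquare (n : ℕ) (S : Finset (TileIndex n)) : Prop :=
  ∃ F : Set (Set (ℝ × ℝ)), (∀ t ∈ F, ∃ x ∈ S, t = tileOf n x) ∧ IsTiling n F unitSquare

open Classical in
/-- Probability of the event `E` when each of the `(n+1)·2^n` order-`n` dyadic tiles is
available independently with probability `p`. -/
def Pr (n : ℕ) (p : ℝ) (E : Finset (TileIndex n) → Prop) : ℝ :=
  ∑ S : Finset (TileIndex n),
    if E S then p ^ S.card * (1 - p) ^ ((n + 1) * 2 ^ n - S.card) else 0

/-- `T n p`: the probability that some set of available order-`n` tiles tiles `[0,1]²`. -/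
def T (n : ℕ) (p : ℝ) : ℝ := Pr n p (TileableSquare n)

/-- The critical probability `p_c`. -/
def pc : ℝ :=
  sInf {p : ℝ | p ∈ Set.Icc (0 : ℝ) 1 ∧ Tendsto (fun n => T n p) atTop (𝓝 1)}

section Bernoulli

open Finset

variable {α β : Type*}

/-- Expectation of `f` when each element of `u` is kept independently with probability `p`. -/
def bernoulliExpect (p : ℝ) (u : Finset α) (f : Finset α → ℝ) : ℝ :=
  ∑ S ∈ u.powerset, p ^ #S * (1 - p) ^ (#u - #S) * f S

@[simp]
lemma bernoulliExpect_empty (p : ℝ) (f : Finset α → ℝ) : bernoulliExpect p ∅ f = f ∅ := by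
  simp [bernoulliExpect]

lemma bernoulliExpect_mono {p : ℝ} (hp : p ∈ Set.Icc 0 1) (u : Finset α) {f g : Finset α → ℝ}
    (h : f ≤ g) : bernoulliExpect p u f ≤ bernoulliExpect p u g :=
  sum_le_sum fun S _ => mul_le_mul_of_nonneg_left (h S)
    (mul_nonneg (pow_nonneg hp.1 _) (pow_nonneg (sub_nonneg.2 hp.2) _))

lemma bernoulliExpect_add_sub (p : ℝ) (u : Finset α) (f g h : Finset α → ℝ) :
    bernoulliExpect p u (f + g - h) =
      bernoulliExpect p u f + bernoulliExpect p u g - bernoulliExpect p u h := by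
  simp only [bernoulliExpect, ← sum_add_distrib, ← sum_sub_distrib]
  exact sum_congr rfl fun S _ => by simp only [Pi.add_apply, Pi.sub_apply]; ring

variable [DecidableEq α]

lemma bernoulliExpect_insert {p : ℝ} {u : Finset α} {a : α} (ha : a ∉ u) (f : Finset α → ℝ) :
    bernoulliExpect p (insert a u) f =
      p * bernoulliExpect p u (fun S => f (insert a S)) + (1 - p) * bernoulliExpect p u f := by
  rw [bernoulliExpect, sum_powerset_insert ha, card_insert_of_notMem ha, add_comm,
    bernoulliExpect, bernoulliExpect, mul_sum, mul_sum]
  congr 1 <;> refine sum_congr rfl fun S hS => ?_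
  · rw [card_insert_of_notMem fun h => ha (mem_powerset.1 hS h), Nat.add_sub_add_right]
    ring
  · rw [Nat.sub_add_comm (Finset.card_le_card (mem_powerset.1 hS))]
    ring

def DependsOnlyOn (f : Finset α → ℝ) (v : Finset α) : Prop := ∀ S, f S = f (S ∩ v)

lemma DependsOnlyOn.apply_insert_of_notMem {f : Finset α → ℝ} {v : Finset α}
    (hf : DependsOnlyOn f v) {a : α} (ha : a ∉ v) (S : Finset α) : f (insert a S) = f S := by
  rw [hf, Finset.insert_inter_of_notMem ha, ← hf]

lemma DependsOnlyOn.comp_insert {f : Finset α → ℝ} {v : Finset α} (hf : DependsOnlyOn f v)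
    {a : α} (ha : a ∈ v) : DependsOnlyOn (fun S => f (insert a S)) v := fun S => by
  show f (insert a S) = f (insert a (S ∩ v))
  rw [hf, Finset.insert_inter_of_mem ha]

lemma bernoulliExpect_inter {p : ℝ} {v : Finset α} (u : Finset α) {f : Finset α → ℝ}
    (hf : DependsOnlyOn f v) : bernoulliExpect p u f = bernoulliExpect p (u ∩ v) f := by
  induction u using Finset.induction_on generalizing f with
  | empty => simp
  | @insert a u ha ih =>
    by_cases hav : a ∈ v
    · rw [bernoulliExpect_insert ha, Finset.insert_inter_of_mem hav,
        bernoulliExpect_insert fun h => ha (mem_inter.1 h).1, ih (hf.comp_insert hav), ih hf]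
    · rw [bernoulliExpect_insert ha, Finset.insert_inter_of_notMem hav, ← ih hf,
        funext (hf.apply_insert_of_notMem hav)]
      ring

lemma bernoulliExpect_mul_of_disjoint {p : ℝ} {v w : Finset α} (hvw : Disjoint v w) (u : Finset α)
    {f g : Finset α → ℝ} (hf : DependsOnlyOn f v) (hg : DependsOnlyOn g w) :
    bernoulliExpect p u (fun S => f S * g S) = bernoulliExpect p u f * bernoulliExpect p u g := by
  induction u using Finset.induction_on generalizing f g with
  | empty => simp
  | @insert a u ha ih =>
    rw [bernoulliExpect_insert ha, bernoulliExpect_insert ha f, bernoulliExpect_insert ha g]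
    by_cases hav : a ∈ v
    · simp only [hg.apply_insert_of_notMem (disjoint_left.1 hvw hav)]
      rw [ih (hf.comp_insert hav) hg, ih hf hg]
      ring
    · simp only [hf.apply_insert_of_notMem hav]
      by_cases haw : a ∈ w
      · rw [ih hf (hg.comp_insert haw), ih hf hg]
        ring
      · simp only [hg.apply_insert_of_notMem haw]
        rw [ih hf hg]
        ring

lemma bernoulliExpect_map {p : ℝ} (e : β ↪ α) (u : Finset β) (f : Finset β → ℝ) :
    bernoulliExpect p (u.map e) (fun S => f (S.preimage e e.injective.injOn)) =
      bernoulliExpect p u f := by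
  rw [bernoulliExpect, card_map, map_eq_image, powerset_image, sum_image fun S _ T _ h =>
    image_injective e.injective h]
  refine sum_congr rfl fun S _ => ?_
  rw [← map_eq_image, preimage_map, card_map]

lemma dependsOnlyOn_comp_preimage [Fintype β] (e : β ↪ α) (f : Finset β → ℝ) :
    DependsOnlyOn (fun S => f (S.preimage e e.injective.injOn)) (univ.map e) := fun S =>
  congrArg f (Finset.ext fun x => by simp)

lemma bernoulliExpect_comp_preimage {p : ℝ} [Fintype α] [Fintype β] (e : β ↪ α)
    (f : Finset β → ℝ) :
    bernoulliExpect p univ (fun S => f (S.preimage e e.injective.injOn)) =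
      bernoulliExpect p univ f := by
  rw [bernoulliExpect_inter _ (dependsOnlyOn_comp_preimage e f), Finset.univ_inter,
    bernoulliExpect_map]

lemma bernoulliExpect_mul_comp_preimage {p : ℝ} [Fintype α] [Fintype β] {e e' : β ↪ α}
    (hee' : Disjoint (univ.map e) (univ.map e')) (f g : Finset β → ℝ) :
    bernoulliExpect p univ
        (fun S => f (S.preimage e e.injective.injOn) * g (S.preimage e' e'.injective.injOn)) =
      bernoulliExpect p univ f * bernoulliExpect p univ g := by
  rw [← bernoulliExpect_comp_preimage e f, ← bernoulliExpect_comp_preimage e' g]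
  exact bernoulliExpect_mul_of_disjoint hee' univ (dependsOnlyOn_comp_preimage e f)
    (dependsOnlyOn_comp_preimage e' g)

/-- Harris' inequality, from the FKG inequality: the Bernoulli weights are log-modular. -/
lemma bernoulliExpect_mul_bernoulliExpect_le [Fintype α] {p : ℝ} (hp : p ∈ Set.Icc 0 1)
    {f g : Finset α → ℝ} (hf₀ : 0 ≤ f) (hg₀ : 0 ≤ g) (hf : Monotone f) (hg : Monotone g) :
    bernoulliExpect p univ f * bernoulliExpect p univ g ≤
      bernoulliExpect p univ (fun S => f S * g S) := by
  set μ : Finset α → ℝ := fun S => p ^ #S * (1 - p) ^ (#(univ : Finset α) - #S)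
  have hμ₀ : 0 ≤ μ := fun S => mul_nonneg (pow_nonneg hp.1 _) (pow_nonneg (sub_nonneg.2 hp.2) _)
  have hμ : ∀ S T, μ S * μ T ≤ μ (S ⊓ T) * μ (S ⊔ T) := fun S T => by
    have hcard := card_union_add_card_inter S T
    have := Finset.card_le_card (subset_univ S); have := Finset.card_le_card (subset_univ T)
    have := Finset.card_le_card (subset_univ (S ∪ T))
    have := Finset.card_le_card (Finset.inter_subset_left : S ∩ T ⊆ S)
    refine le_of_eq ?_
    simp only [μ, Finset.inf_eq_inter, Finset.sup_eq_union]
    rw [mul_mul_mul_comm, ← pow_add, ← pow_add, mul_mul_mul_comm, ← pow_add, ← pow_add]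
    congr 2 <;> omega
  have hmass : ∑ S, μ S = 1 := by
    rw [← Finset.powerset_univ, sum_pow_mul_eq_add_pow, add_sub_cancel, one_pow]
  have h := fkg f g μ hμ₀ hf₀ hg₀ hf hg hμ
  rw [hmass, one_mul] at h
  simp only [bernoulliExpect, Finset.powerset_univ]
  exact h

end Bernoulli

section DyadicIntervals

def dyadicInterval (i a : ℕ) : Set ℝ := Icc (a / 2 ^ i) ((a + 1) / 2 ^ i)

lemma tileOf_eq_prod (n : ℕ) (x : TileIndex n) :
    tileOf n x = dyadicInterval x.1 x.2.1 ×ˢ dyadicInterval (n - x.1) x.2.2 := rfl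

lemma dyadicInterval_nonempty (i a : ℕ) : (dyadicInterval i a).Nonempty :=
  nonempty_Icc.2 (by gcongr; linarith)

lemma interior_dyadicInterval_nonempty (i a : ℕ) : (interior (dyadicInterval i a)).Nonempty := by
  rw [dyadicInterval, interior_Icc]
  exact nonempty_Ioo.2 (by gcongr; linarith)

lemma dyadicInterval_subset_Icc {i a : ℕ} (ha : a < 2 ^ i) : dyadicInterval i a ⊆ Icc 0 1 := by
  refine Icc_subset_Icc (by positivity) ((div_le_one (by positivity)).2 ?_)
  exact_mod_cast ha

lemma dyadicInterval_eq_Icc {i a : ℕ} (hi : i = 0) (ha : a < 2 ^ i) :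
    dyadicInterval i a = Icc 0 1 := by
  subst hi
  obtain rfl : a = 0 := by simpa using ha
  simp [dyadicInterval]

def unitHalf (c : Fin 2) : Set ℝ := Icc (c / 2) ((c + 1) / 2)

lemma dyadicInterval_subset_unitHalf_iff {i a : ℕ} {c : Fin 2} :
    dyadicInterval i a ⊆ unitHalf c ↔ c * 2 ^ i ≤ 2 * a ∧ 2 * (a + 1) ≤ (c + 1) * 2 ^ i := by
  rw [dyadicInterval, unitHalf, Icc_subset_Icc_iff (by gcongr; linarith),
    div_le_div_iff₀ two_pos (by positivity), div_le_div_iff₀ (by positivity) two_pos]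
  norm_cast
  constructor <;> rintro ⟨h₁, h₂⟩ <;> constructor <;> linarith

lemma exists_dyadicInterval_subset_unitHalf {i a : ℕ} (hi : i ≠ 0) (ha : a < 2 ^ i) :
    ∃ c, dyadicInterval i a ⊆ unitHalf c := by
  obtain ⟨i, rfl⟩ := Nat.exists_eq_succ_of_ne_zero hi
  simp only [dyadicInterval_subset_unitHalf_iff, Fin.exists_fin_two, pow_succ] at ha ⊢
  norm_num
  omega

lemma eq_of_unitHalf_inter_interior {c c' : Fin 2}
    (h : (unitHalf c' ∩ interior (unitHalf c)).Nonempty) : c' = c := by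
  rw [unitHalf, unitHalf, interior_Icc] at h
  obtain ⟨x, ⟨h₁, h₂⟩, h₃, h₄⟩ := h
  have : (c' : ℝ) < c + 1 := by linarith
  have : (c : ℝ) < c' + 1 := by linarith
  exact Fin.ext (by norm_cast at *; omega)

end DyadicIntervals

section Rescaling

/-- `x ↦ 2x - c`, which maps `unitHalf c` onto `[0, 1]`. -/
def doubleSub (c : Fin 2) : ℝ ≃ₜ ℝ :=
  (Homeomorph.mulLeft₀ 2 two_ne_zero).trans (Homeomorph.subRight (c : ℝ))

lemma image_doubleSub_Icc (c : Fin 2) (l r : ℝ) :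
    doubleSub c '' Icc l r = Icc (2 * l - c) (2 * r - c) := by
  have h : ⇑(doubleSub c) = fun x => 2 * x + -(c : ℝ) := by
    ext x; simp [doubleSub, sub_eq_add_neg]
  rw [h, image_affine_Icc' two_pos]
  simp only [sub_eq_add_neg]

lemma image_doubleSub_unitHalf (c : Fin 2) : doubleSub c '' unitHalf c = Icc 0 1 := by
  rw [unitHalf, image_doubleSub_Icc]
  congr 1 <;> ring

lemma image_doubleSub_dyadicInterval (i a : ℕ) (c : Fin 2) :
    doubleSub c '' dyadicInterval (i + 1) (a + c * 2 ^ i) = dyadicInterval i a := by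
  rw [dyadicInterval, dyadicInterval, image_doubleSub_Icc]
  push_cast
  congr 1 <;> field_simp <;> ring

def xHalf (c : Fin 2) : Set (ℝ × ℝ) := unitHalf c ×ˢ Icc 0 1

def yHalf (c : Fin 2) : Set (ℝ × ℝ) := Icc 0 1 ×ˢ unitHalf c

def stretchX (c : Fin 2) : ℝ × ℝ ≃ₜ ℝ × ℝ := (doubleSub c).prodCongr (Homeomorph.refl ℝ)

def stretchY (c : Fin 2) : ℝ × ℝ ≃ₜ ℝ × ℝ := (Homeomorph.refl ℝ).prodCongr (doubleSub c)

lemma image_stretchX_xHalf (c : Fin 2) : stretchX c '' xHalf c = unitSquare := by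
  rw [stretchX, Homeomorph.coe_prodCongr, xHalf, prodMap_image_prod, image_doubleSub_unitHalf,
    unitSquare]
  simp

lemma image_stretchY_yHalf (c : Fin 2) : stretchY c '' yHalf c = unitSquare := by
  rw [stretchY, Homeomorph.coe_prodCongr, yHalf, prodMap_image_prod, image_doubleSub_unitHalf,
    unitSquare]
  simp

lemma closure_interior_unitHalf (c : Fin 2) : closure (interior (unitHalf c)) = unitHalf c :=
  closure_interior_Icc (by linarith)

lemma xHalf_subset_closure_interior (c : Fin 2) : xHalf c ⊆ closure (interior (xHalf c)) := by
  rw [xHalf, interior_prod_eq, closure_prod_eq, closure_interior_unitHalf,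
    closure_interior_Icc zero_ne_one]

lemma yHalf_subset_closure_interior (c : Fin 2) : yHalf c ⊆ closure (interior (yHalf c)) := by
  rw [yHalf, interior_prod_eq, closure_prod_eq, closure_interior_unitHalf,
    closure_interior_Icc zero_ne_one]

lemma unitHalf_subset_Icc (c : Fin 2) : unitHalf c ⊆ Icc 0 1 := by
  have : (c : ℝ) ≤ 1 := by exact_mod_cast Nat.le_of_lt_succ c.isLt
  exact Icc_subset_Icc (by positivity) (by linarith)

lemma xHalf_subset_unitSquare (c : Fin 2) : xHalf c ⊆ unitSquare :=
  prod_mono (unitHalf_subset_Icc c) subset_rfl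

lemma yHalf_subset_unitSquare (c : Fin 2) : yHalf c ⊆ unitSquare :=
  prod_mono subset_rfl (unitHalf_subset_Icc c)

end Rescaling

lemma add_mul_two_pow_lt {a i : ℕ} (c : Fin 2) (ha : a < 2 ^ i) : a + c * 2 ^ i < 2 ^ (i + 1) := by
  have : (c : ℕ) * 2 ^ i ≤ 1 * 2 ^ i := Nat.mul_le_mul_right _ (Nat.le_of_lt_succ c.isLt)
  rw [pow_succ]
  omega

namespace TileIndex

lemma ext_val {n : ℕ} {x y : TileIndex n} (h₁ : (x.1 : ℕ) = y.1) (h₂ : (x.2.1 : ℕ) = y.2.1)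
    (h₃ : (x.2.2 : ℕ) = y.2.2) : x = y := by
  obtain ⟨⟨i, hi⟩, ⟨a, ha⟩, ⟨b, hb⟩⟩ := x
  obtain ⟨⟨i', hi'⟩, ⟨a', ha'⟩, ⟨b', hb'⟩⟩ := y
  simp only at h₁ h₂ h₃
  subst h₁ h₂ h₃
  rfl

/-- The order-`(n+1)` tile occupying, inside `xHalf c`, the place of the order-`n` tile `x`. -/
def embX (n : ℕ) (c : Fin 2) : TileIndex n ↪ TileIndex (n + 1) where
  toFun x := ⟨⟨x.1 + 1, by omega⟩, ⟨x.2.1 + c * 2 ^ (x.1 : ℕ), add_mul_two_pow_lt c x.2.1.isLt⟩,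
    ⟨x.2.2, by rw [Nat.add_sub_add_right]; exact x.2.2.isLt⟩⟩
  inj' x y h := by
    have h₁ := congrArg (fun z : TileIndex (n + 1) => (z.1 : ℕ)) h
    have h₂ := congrArg (fun z : TileIndex (n + 1) => (z.2.1 : ℕ)) h
    have h₃ := congrArg (fun z : TileIndex (n + 1) => (z.2.2 : ℕ)) h
    simp only [Nat.add_right_cancel_iff] at h₁ h₂ h₃
    have : (c : ℕ) * 2 ^ (x.1 : ℕ) = c * 2 ^ (y.1 : ℕ) := by rw [h₁]
    exact ext_val h₁ (by omega) h₃

/-- The order-`(n+1)` tile occupying, inside `yHalf c`, the place of the order-`n` tile `x`. -/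
def embY (n : ℕ) (c : Fin 2) : TileIndex n ↪ TileIndex (n + 1) where
  toFun x := ⟨⟨x.1, by omega⟩, x.2.1,
    ⟨x.2.2 + c * 2 ^ (n - x.1), by
      rw [show n + 1 - x.1 = n - x.1 + 1 by omega]; exact add_mul_two_pow_lt c x.2.2.isLt⟩⟩
  inj' x y h := by
    have h₁ := congrArg (fun z : TileIndex (n + 1) => (z.1 : ℕ)) h
    have h₂ := congrArg (fun z : TileIndex (n + 1) => (z.2.1 : ℕ)) h
    have h₃ := congrArg (fun z : TileIndex (n + 1) => (z.2.2 : ℕ)) h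
    simp only at h₁ h₂ h₃
    have : (c : ℕ) * 2 ^ (n - x.1) = c * 2 ^ (n - y.1) := by rw [h₁]
    exact ext_val h₁ h₂ (by omega)

lemma tileOf_embX (n : ℕ) (c : Fin 2) (x : TileIndex n) :
    tileOf (n + 1) (embX n c x) =
      dyadicInterval (x.1 + 1) (x.2.1 + c * 2 ^ (x.1 : ℕ)) ×ˢ dyadicInterval (n - x.1) x.2.2 := by
  show _ ×ˢ dyadicInterval (n + 1 - (x.1 + 1)) x.2.2 = _
  rw [Nat.add_sub_add_right]
  rfl

lemma tileOf_embY (n : ℕ) (c : Fin 2) (x : TileIndex n) :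
    tileOf (n + 1) (embY n c x) =
      dyadicInterval x.1 x.2.1 ×ˢ dyadicInterval (n - x.1 + 1) (x.2.2 + c * 2 ^ (n - x.1)) := by
  show _ ×ˢ dyadicInterval (n + 1 - x.1) _ = _
  rw [show n + 1 - x.1 = n - x.1 + 1 by omega]
  rfl

lemma image_stretchX_tileOf_embX (n : ℕ) (c : Fin 2) (x : TileIndex n) :
    stretchX c '' tileOf (n + 1) (embX n c x) = tileOf n x := by
  rw [tileOf_embX, stretchX, Homeomorph.coe_prodCongr, prodMap_image_prod,
    image_doubleSub_dyadicInterval]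
  simp [tileOf_eq_prod]

lemma image_stretchY_tileOf_embY (n : ℕ) (c : Fin 2) (x : TileIndex n) :
    stretchY c '' tileOf (n + 1) (embY n c x) = tileOf n x := by
  rw [tileOf_embY, stretchY, Homeomorph.coe_prodCongr, prodMap_image_prod,
    image_doubleSub_dyadicInterval]
  simp [tileOf_eq_prod]

lemma exists_embX_eq {n : ℕ} {c : Fin 2} {y : TileIndex (n + 1)}
    (h : tileOf (n + 1) y ⊆ xHalf c) : ∃ x, embX n c x = y := by
  have hy : dyadicInterval y.1 y.2.1 ⊆ unitHalf c := fun u hu => by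
    obtain ⟨v, hv⟩ := dyadicInterval_nonempty (n + 1 - y.1) y.2.2
    exact (h (mk_mem_prod hu hv)).1
  rw [dyadicInterval_subset_unitHalf_iff] at hy
  obtain ⟨⟨i, hi⟩, ⟨a, ha⟩, ⟨b, hb⟩⟩ := y
  have hc := c.isLt
  simp only at hy hb
  obtain _ | i := i
  · simp only [pow_zero, mul_one] at hy
    omega
  have e₁ : (c : ℕ) * 2 ^ (i + 1) = 2 * (c * 2 ^ i) := by ring
  have e₂ : ((c : ℕ) + 1) * 2 ^ (i + 1) = 2 * (c * 2 ^ i) + 2 * 2 ^ i := by ring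
  rw [e₁, e₂] at hy
  rw [Nat.add_sub_add_right] at hb
  have ha' : a - c * 2 ^ i < 2 ^ i := by omega
  exact ⟨⟨⟨i, by omega⟩, ⟨a - c * 2 ^ i, ha'⟩, ⟨b, hb⟩⟩,
    ext_val rfl (Nat.sub_add_cancel (by omega)) rfl⟩

lemma exists_embY_eq {n : ℕ} {c : Fin 2} {y : TileIndex (n + 1)}
    (h : tileOf (n + 1) y ⊆ yHalf c) : ∃ x, embY n c x = y := by
  have hy : dyadicInterval (n + 1 - y.1) y.2.2 ⊆ unitHalf c := fun v hv => by
    obtain ⟨u, hu⟩ := dyadicInterval_nonempty y.1 y.2.1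
    exact (h (mk_mem_prod hu hv)).2
  rw [dyadicInterval_subset_unitHalf_iff] at hy
  obtain ⟨⟨i, hi⟩, ⟨a, ha⟩, ⟨b, hb⟩⟩ := y
  have hc := c.isLt
  simp only at hy hb
  obtain hj | hj := Nat.eq_zero_or_pos (n + 1 - i)
  · rw [hj] at hy
    simp only [pow_zero, mul_one] at hy
    omega
  rw [show n + 1 - i = n - i + 1 by omega] at hy hb
  have e₁ : (c : ℕ) * 2 ^ (n - i + 1) = 2 * (c * 2 ^ (n - i)) := by ring
  have e₂ : ((c : ℕ) + 1) * 2 ^ (n - i + 1) = 2 * (c * 2 ^ (n - i)) + 2 * 2 ^ (n - i) := by ring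
  rw [e₁, e₂] at hy
  rw [pow_succ] at hb
  have hb' : b - c * 2 ^ (n - i) < 2 ^ (n - i) := by omega
  exact ⟨⟨⟨i, by omega⟩, ⟨a, ha⟩, ⟨b - c * 2 ^ (n - i), hb'⟩⟩,
    ext_val rfl rfl (Nat.sub_add_cancel (by omega))⟩

lemma exists_tileOf_subset_xHalf {n : ℕ} {y : TileIndex n} (hy : (y.1 : ℕ) ≠ 0) :
    ∃ c, tileOf n y ⊆ xHalf c :=
  (exists_dyadicInterval_subset_unitHalf hy y.2.1.isLt).imp fun _ hc =>
    prod_mono hc (dyadicInterval_subset_Icc y.2.2.isLt)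

lemma exists_tileOf_subset_yHalf {n : ℕ} {y : TileIndex n} (hy : n - y.1 ≠ 0) :
    ∃ c, tileOf n y ⊆ yHalf c :=
  (exists_dyadicInterval_subset_unitHalf hy y.2.2.isLt).imp fun _ hc =>
    prod_mono (dyadicInterval_subset_Icc y.2.1.isLt) hc

end TileIndex

lemma isDyadicTile_tileOf (n : ℕ) (x : TileIndex n) : IsDyadicTile n (tileOf n x) :=
  ⟨x.1, n - x.1, x.2.1, x.2.2, by omega, x.2.1.isLt, x.2.2.isLt, rfl⟩

lemma isClosed_tileOf (n : ℕ) (x : TileIndex n) : IsClosed (tileOf n x) :=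
  isClosed_Icc.prod isClosed_Icc

/-- Two order-`(n+1)` tiles, one crossing the vertical and one crossing the horizontal midline,
would be a full-width and a full-height strip, whose interiors meet. -/
lemma forall_subset_xHalf_or_forall_subset_yHalf {n : ℕ} {F : Set (Set (ℝ × ℝ))}
    (hF : ∀ t ∈ F, ∃ y : TileIndex (n + 1), t = tileOf (n + 1) y)
    (hpw : F.Pairwise fun s t => interior s ∩ interior t = ∅) :
    (∀ t ∈ F, ∃ c, t ⊆ xHalf c) ∨ (∀ t ∈ F, ∃ c, t ⊆ yHalf c) := by
  by_contra! h
  obtain ⟨⟨_, ht₁, hx⟩, ⟨_, ht₂, hy⟩⟩ := h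
  obtain ⟨y₁, rfl⟩ := hF _ ht₁
  obtain ⟨y₂, rfl⟩ := hF _ ht₂
  have h₁ : (y₁.1 : ℕ) = 0 := by
    by_contra h
    obtain ⟨c, hc⟩ := TileIndex.exists_tileOf_subset_xHalf h
    exact hx c hc
  have h₂ : n + 1 - y₂.1 = 0 := by
    by_contra h
    obtain ⟨c, hc⟩ := TileIndex.exists_tileOf_subset_yHalf h
    exact hy c hc
  have hne : tileOf (n + 1) y₁ ≠ tileOf (n + 1) y₂ := by
    obtain ⟨c, hc⟩ := TileIndex.exists_tileOf_subset_yHalf (n := n + 1) (y := y₁) (by omega)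
    exact fun h => hy c (h ▸ hc)
  obtain ⟨u, hu⟩ := interior_dyadicInterval_nonempty y₂.1 y₂.2.1
  obtain ⟨v, hv⟩ := interior_dyadicInterval_nonempty (n + 1 - y₁.1) y₁.2.2
  have hmem₁ : (u, v) ∈ interior (tileOf (n + 1) y₁) := by
    rw [tileOf_eq_prod, interior_prod_eq, dyadicInterval_eq_Icc h₁ y₁.2.1.isLt]
    exact ⟨interior_mono (dyadicInterval_subset_Icc y₂.2.1.isLt) hu, hv⟩
  have hmem₂ : (u, v) ∈ interior (tileOf (n + 1) y₂) := by
    rw [tileOf_eq_prod, interior_prod_eq, dyadicInterval_eq_Icc h₂ y₂.2.2.isLt]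
    exact ⟨hu, interior_mono (dyadicInterval_subset_Icc y₁.2.2.isLt) hv⟩
  exact eq_empty_iff_forall_notMem.1 (hpw ht₁ ht₂ hne) _ ⟨hmem₁, hmem₂⟩

lemma sUnion_sep_subset_eq {X : Type*} [TopologicalSpace X] {F : Set (Set X)} {H : Set X}
    (hfin : F.Finite) (hcl : ∀ t ∈ F, IsClosed t) (hcover : interior H ⊆ ⋃₀ F)
    (hmeet : ∀ t ∈ F, (t ∩ interior H).Nonempty → t ⊆ H) (hH : H ⊆ closure (interior H)) :
    ⋃₀ {t ∈ F | t ⊆ H} = H := by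
  refine (sUnion_subset fun t ht => ht.2).antisymm (hH.trans (closure_minimal ?_ ?_))
  · intro z hz
    obtain ⟨t, ht, hzt⟩ := hcover hz
    exact ⟨t, ⟨ht, hmeet t ht ⟨z, hzt, hz⟩⟩, hzt⟩
  · rw [sUnion_eq_biUnion]
    exact (hfin.subset (sep_subset _ _)).isClosed_biUnion fun t ht => hcl t ht.1

/-- The tiles lying in `H` tile `H` once no other tile meets its interior; `Φ` rescales them to a
tiling of the square by order-`n` tiles. -/
lemma tileableSquare_preimage_of_half {n : ℕ} {S : Finset (TileIndex (n + 1))}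
    {F : Set (Set (ℝ × ℝ))} (hFS : ∀ t ∈ F, ∃ y ∈ S, t = tileOf (n + 1) y)
    (hF : IsTiling (n + 1) F unitSquare) {H : Set (ℝ × ℝ)} (hHsq : H ⊆ unitSquare)
    (hH : H ⊆ closure (interior H)) (hmeet : ∀ t ∈ F, (t ∩ interior H).Nonempty → t ⊆ H)
    (Φ : ℝ × ℝ ≃ₜ ℝ × ℝ) (hΦH : Φ '' H = unitSquare) (u : TileIndex n ↪ TileIndex (n + 1))
    (hu : ∀ x, Φ '' tileOf (n + 1) (u x) = tileOf n x)
    (hrange : ∀ y, tileOf (n + 1) y ⊆ H → ∃ x, u x = y) :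
    TileableSquare n (S.preimage u u.injective.injOn) := by
  obtain ⟨-, hunion, hpw⟩ := hF
  have hfin : F.Finite := (S.finite_toSet.image (tileOf (n + 1))).subset fun t ht => by
    obtain ⟨y, hy, rfl⟩ := hFS t ht
    exact mem_image_of_mem _ hy
  have hcl : ∀ t ∈ F, IsClosed t := fun t ht => by
    obtain ⟨y, -, rfl⟩ := hFS t ht
    exact isClosed_tileOf _ y
  have hG : ⋃₀ {t ∈ F | t ⊆ H} = H :=
    sUnion_sep_subset_eq hfin hcl (hunion ▸ interior_subset.trans hHsq) hmeet hH
  have key : ∀ t ∈ {t ∈ F | t ⊆ H}, ∃ x ∈ S.preimage u u.injective.injOn, Φ '' t = tileOf n x := by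
    rintro t ⟨ht, htH⟩
    obtain ⟨y, hy, rfl⟩ := hFS t ht
    obtain ⟨x, rfl⟩ := hrange y htH
    exact ⟨x, Finset.mem_preimage.2 hy, hu x⟩
  refine ⟨image Φ '' {t ∈ F | t ⊆ H}, ?_, ?_, ?_, ?_⟩
  · rintro _ ⟨t, ht, rfl⟩
    obtain ⟨x, hx, e⟩ := key t ht
    exact ⟨x, hx, e⟩
  · rintro _ ⟨t, ht, rfl⟩
    obtain ⟨x, -, e⟩ := key t ht
    exact e ▸ isDyadicTile_tileOf n x
  · rw [← image_sUnion, hG, hΦH]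
  · rintro _ ⟨s, hs, rfl⟩ _ ⟨t, ht, rfl⟩ hst
    rw [← Φ.image_interior, ← Φ.image_interior, ← image_inter Φ.injective,
      hpw hs.1 ht.1 (ne_of_apply_ne _ hst), image_empty]

lemma eq_of_xHalf_inter_interior {c c' : Fin 2} (h : (xHalf c' ∩ interior (xHalf c)).Nonempty) :
    c' = c := by
  obtain ⟨z, hz, hz'⟩ := h
  rw [xHalf, interior_prod_eq] at hz'
  exact eq_of_unitHalf_inter_interior ⟨z.1, hz.1, hz'.1⟩

lemma eq_of_yHalf_inter_interior {c c' : Fin 2} (h : (yHalf c' ∩ interior (yHalf c)).Nonempty) :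
    c' = c := by
  obtain ⟨z, hz, hz'⟩ := h
  rw [yHalf, interior_prod_eq] at hz'
  exact eq_of_unitHalf_inter_interior ⟨z.2, hz.2, hz'.2⟩

open TileIndex in
lemma TileableSquare.halves {n : ℕ} {S : Finset (TileIndex (n + 1))}
    (h : TileableSquare (n + 1) S) :
    (∀ c, TileableSquare n (S.preimage (embX n c) (embX n c).injective.injOn)) ∨
      ∀ c, TileableSquare n (S.preimage (embY n c) (embY n c).injective.injOn) := by
  obtain ⟨F, hFS, hF⟩ := h
  rcases forall_subset_xHalf_or_forall_subset_yHalf (fun t ht => (hFS t ht).imp fun _ hy => hy.2)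
    hF.2.2 with hX | hY
  · refine Or.inl fun c => tileableSquare_preimage_of_half hFS hF (xHalf_subset_unitSquare c)
      (xHalf_subset_closure_interior c) (fun t ht ⟨z, hzt, hz⟩ => ?_) (stretchX c)
      (image_stretchX_xHalf c) (embX n c) (image_stretchX_tileOf_embX n c)
      fun _ => exists_embX_eq
    obtain ⟨c', hc'⟩ := hX t ht
    exact eq_of_xHalf_inter_interior ⟨z, hc' hzt, hz⟩ ▸ hc'
  · refine Or.inr fun c => tileableSquare_preimage_of_half hFS hF (yHalf_subset_unitSquare c)
      (yHalf_subset_closure_interior c) (fun t ht ⟨z, hzt, hz⟩ => ?_) (stretchY c)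
      (image_stretchY_yHalf c) (embY n c) (image_stretchY_tileOf_embY n c)
      fun _ => exists_embY_eq
    obtain ⟨c', hc'⟩ := hY t ht
    exact eq_of_yHalf_inter_interior ⟨z, hc' hzt, hz⟩ ▸ hc'

lemma TileableSquare.mono {n : ℕ} {S S' : Finset (TileIndex n)} (h : S ⊆ S')
    (hS : TileableSquare n S) : TileableSquare n S' := by
  obtain ⟨F, hF, hFt⟩ := hS
  exact ⟨F, fun t ht => (hF t ht).imp fun _ hx => ⟨h hx.1, hx.2⟩, hFt⟩

section TilingProbability

open TileIndex

lemma card_tileIndex (n : ℕ) : Fintype.card (TileIndex n) = (n + 1) * 2 ^ n := by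
  rw [Fintype.card_sigma]
  calc ∑ i : Fin (n + 1), Fintype.card (Fin (2 ^ (i : ℕ)) × Fin (2 ^ (n - i)))
      = ∑ _i : Fin (n + 1), 2 ^ n := Finset.sum_congr rfl fun i _ => by
        rw [Fintype.card_prod, Fintype.card_fin, Fintype.card_fin, ← pow_add,
          Nat.add_sub_cancel' (Nat.le_of_lt_succ i.isLt)]
    _ = (n + 1) * 2 ^ n := by simp

open Classical in
def tileableIndicator (n : ℕ) (S : Finset (TileIndex n)) : ℝ :=
  if TileableSquare n S then 1 else 0

lemma tileableIndicator_nonneg (n : ℕ) : 0 ≤ tileableIndicator n := fun S => by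
  unfold tileableIndicator; split_ifs <;> norm_num

lemma tileableIndicator_le_one (n : ℕ) (S : Finset (TileIndex n)) : tileableIndicator n S ≤ 1 := by
  unfold tileableIndicator; split_ifs <;> norm_num

lemma tileableIndicator_monotone (n : ℕ) : Monotone (tileableIndicator n) := fun S S' h => by
  unfold tileableIndicator
  by_cases hS : TileableSquare n S
  · rw [if_pos hS, if_pos (hS.mono h)]
  · rw [if_neg hS]
    split_ifs <;> norm_num

lemma T_eq_bernoulliExpect (n : ℕ) (p : ℝ) :
    T n p = bernoulliExpect p Finset.univ (tileableIndicator n) := by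
  rw [T, Pr, bernoulliExpect, Finset.powerset_univ, Finset.card_univ, card_tileIndex]
  refine Finset.sum_congr rfl fun S _ => ?_
  unfold tileableIndicator
  split_ifs <;> ring

lemma T_nonneg (n : ℕ) {p : ℝ} (hp : p ∈ Icc 0 1) : 0 ≤ T n p := by
  rw [T_eq_bernoulliExpect]
  exact Finset.sum_nonneg fun S _ => mul_nonneg
    (mul_nonneg (pow_nonneg hp.1 _) (pow_nonneg (sub_nonneg.2 hp.2) _))
    (tileableIndicator_nonneg n S)

lemma disjoint_map_embX (n : ℕ) :
    Disjoint (Finset.univ.map (embX n 0)) (Finset.univ.map (embX n 1)) := by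
  refine Finset.disjoint_left.2 fun z hz₀ hz₁ => ?_
  obtain ⟨x, -, rfl⟩ := Finset.mem_map.1 hz₀
  obtain ⟨y, -, h⟩ := Finset.mem_map.1 hz₁
  have h₁ : (y.1 : ℕ) + 1 = x.1 + 1 := congrArg (fun z : TileIndex (n + 1) => (z.1 : ℕ)) h
  have h₂ : (y.2.1 : ℕ) + (1 : Fin 2) * 2 ^ (y.1 : ℕ) = x.2.1 + (0 : Fin 2) * 2 ^ (x.1 : ℕ) :=
    congrArg (fun z : TileIndex (n + 1) => (z.2.1 : ℕ)) h
  have : 2 ^ (y.1 : ℕ) = 2 ^ (x.1 : ℕ) := by rw [Nat.add_right_cancel h₁]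
  have := x.2.1.isLt
  simp only [Fin.val_zero, Fin.val_one, zero_mul, one_mul] at h₂
  omega

lemma disjoint_map_embY (n : ℕ) :
    Disjoint (Finset.univ.map (embY n 0)) (Finset.univ.map (embY n 1)) := by
  refine Finset.disjoint_left.2 fun z hz₀ hz₁ => ?_
  obtain ⟨x, -, rfl⟩ := Finset.mem_map.1 hz₀
  obtain ⟨y, -, h⟩ := Finset.mem_map.1 hz₁
  have h₁ : (y.1 : ℕ) = x.1 := congrArg (fun z : TileIndex (n + 1) => (z.1 : ℕ)) h
  have h₂ : (y.2.2 : ℕ) + (1 : Fin 2) * 2 ^ (n - y.1) = x.2.2 + (0 : Fin 2) * 2 ^ (n - x.1) :=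
    congrArg (fun z : TileIndex (n + 1) => (z.2.2 : ℕ)) h
  have : 2 ^ (n - y.1) = 2 ^ (n - x.1) := by rw [h₁]
  have := x.2.2.isLt
  simp only [Fin.val_zero, Fin.val_one, zero_mul, one_mul] at h₂
  omega

def pairTileableIndicator (n : ℕ) (e₀ e₁ : TileIndex n ↪ TileIndex (n + 1))
    (S : Finset (TileIndex (n + 1))) : ℝ :=
  tileableIndicator n (S.preimage e₀ e₀.injective.injOn) *
    tileableIndicator n (S.preimage e₁ e₁.injective.injOn)

section PairTileableIndicator

variable {n : ℕ} {e₀ e₁ : TileIndex n ↪ TileIndex (n + 1)}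

lemma pairTileableIndicator_nonneg : 0 ≤ pairTileableIndicator n e₀ e₁ := fun _ =>
  mul_nonneg (tileableIndicator_nonneg n _) (tileableIndicator_nonneg n _)

lemma pairTileableIndicator_le_one (S : Finset (TileIndex (n + 1))) :
    pairTileableIndicator n e₀ e₁ S ≤ 1 :=
  mul_le_one₀ (tileableIndicator_le_one n _) (tileableIndicator_nonneg n _)
    (tileableIndicator_le_one n _)

lemma pairTileableIndicator_monotone : Monotone (pairTileableIndicator n e₀ e₁) :=
  ((tileableIndicator_monotone n).comp (Finset.monotone_preimage e₀.injective)).mul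
    ((tileableIndicator_monotone n).comp (Finset.monotone_preimage e₁.injective))
    (fun _ => tileableIndicator_nonneg n _) (fun _ => tileableIndicator_nonneg n _)

lemma pairTileableIndicator_eq_one {S : Finset (TileIndex (n + 1))}
    (h₀ : TileableSquare n (S.preimage e₀ e₀.injective.injOn))
    (h₁ : TileableSquare n (S.preimage e₁ e₁.injective.injOn)) :
    pairTileableIndicator n e₀ e₁ S = 1 := by
  simp only [pairTileableIndicator, tileableIndicator, if_pos h₀, if_pos h₁, one_mul]

lemma bernoulliExpect_pairTileableIndicator {p : ℝ}
    (h : Disjoint (Finset.univ.map e₀) (Finset.univ.map e₁)) :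
    bernoulliExpect p Finset.univ (pairTileableIndicator n e₀ e₁) = T n p ^ 2 := by
  unfold pairTileableIndicator
  rw [bernoulliExpect_mul_comp_preimage h, ← T_eq_bernoulliExpect, sq]

end PairTileableIndicator

lemma tileableIndicator_succ_le (n : ℕ) :
    let X := pairTileableIndicator n (embX n 0) (embX n 1)
    let Y := pairTileableIndicator n (embY n 0) (embY n 1)
    tileableIndicator (n + 1) ≤ X + Y - fun S => X S * Y S := by
  intro X Y S
  have hX₀ : 0 ≤ X S := pairTileableIndicator_nonneg S
  have hX₁ : X S ≤ 1 := pairTileableIndicator_le_one S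
  have hY₀ : 0 ≤ Y S := pairTileableIndicator_nonneg S
  simp only [Pi.add_apply, Pi.sub_apply, tileableIndicator]
  split_ifs with hS
  · rcases hS.halves with h | h
    · rw [show X S = 1 from pairTileableIndicator_eq_one (h 0) (h 1)]
      linarith
    · rw [show Y S = 1 from pairTileableIndicator_eq_one (h 0) (h 1)]
      linarith
  · nlinarith

/-- A tiling at order `n + 1` splits side by side or stacked into tilings of two halves; each split
is a pair of independent order-`n` events, and the two splits are positively correlated by
Harris' inequality. -/
lemma T_succ_le (n : ℕ) {p : ℝ} (hp : p ∈ Icc 0 1) :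
    T (n + 1) p ≤ 2 * T n p ^ 2 - T n p ^ 4 := by
  set X := pairTileableIndicator n (embX n 0) (embX n 1)
  set Y := pairTileableIndicator n (embY n 0) (embY n 1)
  have hX : bernoulliExpect p Finset.univ X = T n p ^ 2 :=
    bernoulliExpect_pairTileableIndicator (disjoint_map_embX n)
  have hY : bernoulliExpect p Finset.univ Y = T n p ^ 2 :=
    bernoulliExpect_pairTileableIndicator (disjoint_map_embY n)
  have hXY := bernoulliExpect_mul_bernoulliExpect_le hp pairTileableIndicator_nonneg
    pairTileableIndicator_nonneg (pairTileableIndicator_monotone (e₀ := embX n 0) (e₁ := embX n 1))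
    (pairTileableIndicator_monotone (e₀ := embY n 0) (e₁ := embY n 1))
  calc T (n + 1) p = bernoulliExpect p Finset.univ (tileableIndicator (n + 1)) :=
        T_eq_bernoulliExpect _ _
    _ ≤ bernoulliExpect p Finset.univ (X + Y - fun S => X S * Y S) :=
        bernoulliExpect_mono hp _ (tileableIndicator_succ_le n)
    _ = bernoulliExpect p Finset.univ X + bernoulliExpect p Finset.univ Y -
        bernoulliExpect p Finset.univ (fun S => X S * Y S) := bernoulliExpect_add_sub _ _ _ _ _
    _ ≤ 2 * T n p ^ 2 - T n p ^ 4 := by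
        rw [hX, hY] at hXY ⊢
        linarith

end TilingProbability

/-- On `[0, c]` with `c = t m`, `2x² - x⁴ ≤ (2c - c³) x`, and `2c - c³ < 1` exactly when
`c² + c < 1`, i.e. `c < (√5 - 1)/2`. -/
lemma tendsto_zero_of_le_two_sq_sub_pow_four {t : ℕ → ℝ} (h₀ : ∀ n, 0 ≤ t n)
    (hrec : ∀ n, t (n + 1) ≤ 2 * t n ^ 2 - t n ^ 4) {m : ℕ} (hm : t m < (√5 - 1) / 2) :
    Tendsto t atTop (𝓝 0) := by
  set c := t m
  have hc₀ : 0 ≤ c := h₀ m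
  have hgolden : c ^ 2 + c < 1 := by
    have h5 : √5 ^ 2 = 5 := Real.sq_sqrt (by norm_num)
    nlinarith [Real.sqrt_nonneg 5]
  set q := 2 * c - c ^ 3
  have hq₀ : 0 ≤ q := by nlinarith
  have hq₁ : q < 1 := by nlinarith
  have hstep : ∀ x, 0 ≤ x → x ≤ c → 2 * x ^ 2 - x ^ 4 ≤ q * x := fun x hx hxc => by
    have : 0 ≤ (c - x) * (2 - c ^ 2 - c * x - x ^ 2) := by
      apply mul_nonneg <;> nlinarith
    nlinarith [mul_nonneg hx this]
  have hbound : ∀ k, t (k + m) ≤ c * q ^ k := by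
    intro k
    induction k with
    | zero => simp [c]
    | succ k ih =>
      have hle : t (k + m) ≤ c := ih.trans (mul_le_of_le_one_right hc₀ (pow_le_one₀ hq₀ hq₁.le))
      calc t (k + 1 + m) = t (k + m + 1) := by rw [Nat.add_right_comm]
        _ ≤ q * t (k + m) := (hrec _).trans (hstep _ (h₀ _) hle)
        _ ≤ q * (c * q ^ k) := mul_le_mul_of_nonneg_left ih hq₀
        _ = c * q ^ (k + 1) := by ring
  rw [← tendsto_add_atTop_iff_nat m]
  refine squeeze_zero (fun k => h₀ _) hbound ?_
  simpa using (tendsto_pow_atTop_nhds_zero_of_lt_one hq₀ hq₁).const_mul c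

/-- if `T_n(p) < (√5 - 1)/2` for some `n`, then `T_n(p) → 0`. -/
theorem tendsto_zero_of_lt_golden (p : ℝ) (hp : p ∈ Set.Icc (0 : ℝ) 1)
    (h : ∃ n : ℕ, T n p < (Real.sqrt 5 - 1) / 2) :
    Tendsto (fun n => T n p) atTop (𝓝 0) := by
  obtain ⟨m, hm⟩ := h
  exact tendsto_zero_of_le_two_sq_sub_pow_four (fun n => T_nonneg n hp) (fun n => T_succ_le n hp) hm

end
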